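/- Let i ≥ 1 and suppose χ_i := q11^{i²}·q12^i·q21^i·q22 satisfies χ_i = −1. Then for every m ≥ 1, ((D₁^{i+1} ∘ D₂) ∘ (D₁^{i-1} ∘ D₂))(z_i^{2m}) = m·c_i·c_{i+1}·z_i^{2(m-1)}, where c_j := q21^{-j}·b_j·[j]!_{q11^{-1}}. (Consequently, if k has characteristic zero and c_i·c_{i+1} ≠ 0 then no even power of z_i lies in the common kernel of all iterated compositions of D₁ and D₂, which is the key step in condition (A5) of the classification.) -/

import Mathlib

noncomputable section

variable {k : Type*} [Field k]

/-- The algebra endomorphism of the free algebra on two generators with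
`x1 ↦ a • x1`, `x2 ↦ b • x2`. -/
def alph (a b : k) : FreeAlgebra k (Fin 2) →ₐ[k] FreeAlgebra k (Fin 2) :=
  FreeAlgebra.lift k ![a • FreeAlgebra.ι k 0, b • FreeAlgebra.ι k 1]

/-- The elements `z_i`, defined by `z_0 = x2`, `z_{i+1} = x1·z_i − q11^i·q12·z_i·x1`. -/
def zz (q11 q12 : k) : ℕ → FreeAlgebra k (Fin 2)
  | 0 => FreeAlgebra.ι k 1
  | (i + 1) => FreeAlgebra.ι k 0 * zz q11 q12 i
      - (q11 ^ i * q12) • (zz q11 q12 i * FreeAlgebra.ι k 0)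

/-- The elements `u_i`, defined by `u_0 = x1`, `u_{i+1} = u_i·x2 − q12·q22^i·x2·u_i`. -/
def uu (q12 q22 : k) : ℕ → FreeAlgebra k (Fin 2)
  | 0 => FreeAlgebra.ι k 0
  | (i + 1) => uu q12 q22 i * FreeAlgebra.ι k 1
      - (q12 * q22 ^ i) • (FreeAlgebra.ι k 1 * uu q12 q22 i)

/-- The q-number `[m]_p = 1 + p + ⋯ + p^{m-1}`. -/
def qnum (p : k) (m : ℕ) : k := ∑ j ∈ Finset.range m, p ^ j

/-- The q-factorial `[m]!_p = [1]_p·[2]_p⋯[m]_p`. -/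
def qfact (p : k) (m : ℕ) : k := ∏ l ∈ Finset.range m, qnum p (l + 1)

/-- `b_i = ∏_{j=0}^{i-1} (1 − q11^j·q12·q21)`. -/
def bb (q11 q12 q21 : k) (i : ℕ) : k :=
  ∏ j ∈ Finset.range i, (1 - q11 ^ j * q12 * q21)

/-- `c_i = q21^{-i}·b_i·[i]!_{q11⁻¹}`. -/
def cc (q11 q12 q21 : k) (i : ℕ) : k :=
  q21⁻¹ ^ i * bb q11 q12 q21 i * qfact q11⁻¹ i

/-- `d_{i,0}`. -/
def dd (q11 q12 q21 q22 : k) (i : ℕ) : k :=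
  q21⁻¹ * (1 - q11 ^ i * q12 * q21) * qnum q11⁻¹ (i + 1)
    + (q11 ^ (i * (i + 1)) * q12 ^ i * q21 ^ (i + 1) * q22)⁻¹
    - q11 ^ (i * (i + 1)) * q12 ^ (i + 1) * q21 ^ i * q22

/-!
Write `z = z_i` and `x = x1`. Then `D₁ z = 0`, `D₁ x = 1`, `D₂ x = 0`, `D₂ z = q21^{-i} b_i x^i`,
and the twisting maps act diagonally: `α₁ z = ρ z`, `α₂ z = μ z`, `α₂ x = q21⁻¹ x`. Hence
`D₂ (z^{2m})` is a sum of the words `z^t x^i z^{2m-1-t}`; `D₁^{i-1}` lowers `x^i` to `x`, the second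
`D₂` turns one more `z` into `x^i`, and `D₁^{i+1}` removes all `x`'s, so every word ends up as a scalar
multiple of `z^{2(m-1)}`. The hypothesis `χ_i = -1` is exactly `μ ρ^i = -1`, which makes the sums
over the position of the new `x^i` alternating, so they collapse to parity indicators. Up to the
common factor `(q21^{-i} b_i)² [i]! [i+1]!`, the `t`-th word then contributes `q21⁻¹` for even `t`
and `μ ρ^{i-1} = -q11^i q12` for odd `t`, and the `m` pairs add up to
`m q21⁻¹ (1 - q11^i q12 q21)`, which gives `m c_i c_{i+1}`.
-/

open Finset

theorem qnum_add (p : k) (a b : ℕ) : qnum p (a + b) = qnum p a + p ^ a * qnum p b := by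
  simp only [qnum, sum_range_add, pow_add, mul_sum]

theorem qfact_zero (p : k) : qfact p 0 = 1 := prod_range_zero _

theorem qfact_one (p : k) : qfact p 1 = 1 := by simp [qfact, qnum]

theorem qfact_succ (p : k) (n : ℕ) : qfact p (n + 1) = qfact p n * qnum p (n + 1) :=
  prod_range_succ _ _

theorem bb_succ (q11 q12 q21 : k) (j : ℕ) :
    bb q11 q12 q21 (j + 1) = bb q11 q12 q21 j * (1 - q11 ^ j * q12 * q21) :=
  prod_range_succ _ _

def IsSkewDerivation {A : Type*} [Ring A] [Algebra k A] (σ : A →ₐ[k] A) (D : A →ₗ[k] A) :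
    Prop :=
  ∀ a b, D (a * b) = D a * b + σ a * D b

namespace IsSkewDerivation

variable {A : Type*} [Ring A] [Algebra k A] {σ : A →ₐ[k] A} {D : A →ₗ[k] A}
  (hD : IsSkewDerivation σ D)
include hD

theorem map_one_eq_zero : D 1 = 0 := by
  simpa using hD 1 1

theorem map_pow {z : A} {μ : k} (hz : σ z = μ • z) (n : ℕ) :
    D (z ^ n) = ∑ t ∈ range n, μ ^ t • (z ^ t * D z * z ^ (n - 1 - t)) := by
  induction n with
  | zero => simp [hD.map_one_eq_zero]
  | succ n ih =>
    rw [pow_succ', hD, ih, hz, sum_range_succ', mul_sum, add_comm]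
    congr 1
    · refine sum_congr rfl fun t ht => ?_
      rw [show n + 1 - 1 - (t + 1) = n - 1 - t by omega, smul_mul_smul_comm, pow_succ', pow_succ']
      simp only [mul_assoc]
    · simp

section Kernel

variable {z : A} {ρ : k} (hDz : D z = 0) (hz : σ z = ρ • z)
include hDz hz

theorem map_pow_mul_of_map_eq_zero (n : ℕ) (v : A) : D (z ^ n * v) = ρ ^ n • (z ^ n * D v) := by
  induction n with
  | zero => simp
  | succ n ih =>
    rw [pow_succ', mul_assoc, hD, hDz, zero_mul, zero_add, hz, ih, smul_mul_smul_comm, ← pow_succ',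
      ← mul_assoc, ← pow_succ']

theorem iterate_pow_mul_of_map_eq_zero (n r : ℕ) (v : A) :
    D^[r] (z ^ n * v) = (ρ ^ n) ^ r • (z ^ n * D^[r] v) := by
  induction r generalizing v with
  | zero => simp
  | succ r ih =>
    rw [Function.iterate_succ_apply, Function.iterate_succ_apply,
      hD.map_pow_mul_of_map_eq_zero hDz hz, ← Module.End.pow_apply, map_smul, Module.End.pow_apply, ih, smul_smul, pow_succ']

end Kernel

section Unit

variable {x : A} {p : k} (hDx : D x = 1) (hx : σ x = p • x)
include hDx hx

theorem map_pow_succ_mul_of_map_eq_one (n : ℕ) (v : A) :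
    D (x ^ (n + 1) * v) = qnum p (n + 1) • (x ^ n * v) + p ^ (n + 1) • (x ^ (n + 1) * D v) := by
  induction n generalizing v with
  | zero => simp [hD x v, hDx, hx, qnum]
  | succ n ih =>
    have hq : qnum p (n + 1 + 1) = qnum p (n + 1) + p ^ (n + 1) := sum_range_succ _ _
    rw [pow_succ, mul_assoc, ih, hD x v, hDx, hx, hq]
    simp only [one_mul, mul_add, mul_smul_comm, smul_mul_assoc, ← mul_assoc, ← pow_succ, smul_add,
      smul_smul, add_smul]
    abel

theorem qfact_smul_iterate_pow_mul {w : A} (hDw : D w = 0) (s r : ℕ) :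
    qfact p s • D^[r] (x ^ (s + r) * w) = qfact p (s + r) • (x ^ s * w) := by
  induction r with
  | zero => simp
  | succ r ih =>
    rw [Function.iterate_succ_apply, ← add_assoc, hD.map_pow_succ_mul_of_map_eq_one hDx hx, hDw,
      mul_zero, smul_zero, add_zero, ← Module.End.pow_apply, map_smul, Module.End.pow_apply,
      smul_comm, ih, smul_smul, qfact_succ, mul_comm]

end Unit

section Word

variable {x z : A} {p ρ : k} (hDx : D x = 1) (hx : σ x = p • x) (hDz : D z = 0)
  (hz : σ z = ρ • z)
include hDx hx hDz hz

theorem iterate_pow_mul_pow_mul_pow_mul {w : A} (hDw : D w = 0) (b j e : ℕ) :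
    D^[j + e] (x ^ j * (z ^ b * (x ^ e * w))) = (ρ ^ (b * e) * qfact p (j + e)) • (z ^ b * w) := by
  induction j generalizing e with
  | zero =>
    have h := hD.qfact_smul_iterate_pow_mul hDx hx hDw 0 e
    rw [qfact_zero, one_smul, zero_add, pow_zero, one_mul] at h
    rw [zero_add, pow_zero, one_mul, hD.iterate_pow_mul_of_map_eq_zero hDz hz, h, mul_smul_comm,
      smul_smul, ← pow_mul]
  | succ j ihj =>
    induction e with
    | zero =>
      have hDzw : D (z ^ b * w) = 0 := by
        rw [hD.map_pow_mul_of_map_eq_zero hDz hz, hDw, mul_zero, smul_zero]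
      have h := hD.qfact_smul_iterate_pow_mul hDx hx hDzw 0 (j + 1)
      rw [qfact_zero, one_smul, zero_add, pow_zero, one_mul] at h
      simpa using h
    | succ e ihe =>
      have hstep : D (x ^ (j + 1) * (z ^ b * (x ^ (e + 1) * w)))
          = qnum p (j + 1) • (x ^ j * (z ^ b * (x ^ (e + 1) * w)))
            + (p ^ (j + 1) * (ρ ^ b * qnum p (e + 1))) • (x ^ (j + 1) * (z ^ b * (x ^ e * w))) := by
        rw [hD.map_pow_succ_mul_of_map_eq_one hDx hx, hD.map_pow_mul_of_map_eq_zero hDz hz,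
          hD.map_pow_succ_mul_of_map_eq_one hDx hx, hDw]
        simp only [mul_zero, smul_zero, add_zero, mul_smul_comm, smul_smul]
      rw [show j + 1 + (e + 1) = j + (e + 1) + 1 by omega, Function.iterate_succ_apply, hstep,
        ← Module.End.pow_apply, map_add, map_smul, map_smul, Module.End.pow_apply,
        Module.End.pow_apply, ihj, show j + (e + 1) = j + 1 + e by omega, ihe, smul_smul,
        smul_smul, ← add_smul, qfact_succ, add_assoc (j + 1), qnum_add p (j + 1) (e + 1)]
      congr 1
      ring

end Word

theorem iterate_pow_mul_pow_mul_pow_mul_pow {x z : A} {p ρ : k} (hDx : D x = 1)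
    (hx : σ x = p • x) (hDz : D z = 0) (hz : σ z = ρ • z) (a j b e c : ℕ) :
    D^[j + e] (z ^ a * (x ^ j * (z ^ b * (x ^ e * z ^ c))))
      = (ρ ^ (a * (j + e) + b * e) * qfact p (j + e)) • z ^ (a + b + c) := by
  have hDzc : D (z ^ c) = 0 := by simp [hD.map_pow hz, hDz]
  rw [hD.iterate_pow_mul_of_map_eq_zero hDz hz,
    hD.iterate_pow_mul_pow_mul_pow_mul hDx hx hDz hz hDzc,
    mul_smul_comm, smul_smul, ← pow_mul, pow_add, ← mul_assoc, ← pow_add, ← pow_add, ← pow_add,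
    add_assoc]

end IsSkewDerivation

theorem sum_range_pow_mul_pow_eq_ite {μ ρ : k} {n : ℕ} (h : μ * ρ ^ (n + 1) = -1) (t : ℕ) :
    ∑ r ∈ range t, μ ^ r * ρ ^ (r * (n + 1)) = if Even t then 0 else 1 := by
  simp_rw [mul_comm _ (n + 1), pow_mul, ← mul_pow, h, neg_one_geom_sum]

theorem sum_range_two_mul_ite_even (a b : k) (m : ℕ) :
    ∑ t ∈ range (2 * m), (if Even t then a else b) = m * (a + b) := by
  induction m with
  | zero => simp
  | succ m ih =>
    rw [mul_add_one, sum_range_succ, sum_range_succ, ih, if_pos (even_two_mul m),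
      if_neg (Nat.not_even_two_mul_add_one m)]
    push_cast
    ring

theorem pow_mul_pow_mul_eq_ite {μ ρ ν : k} {n m t : ℕ} (h : μ * ρ ^ (n + 1) = -1) (ht : t < 2 * m) :
    μ ^ t * ρ ^ (t * n) * (ρ ^ (t - 1) * (if Even t then 0 else 1)
      + ν * μ ^ t * ρ ^ (t * (n + 1 + 1)) * (if Even (2 * m - 1 - t) then 0 else 1))
      = if Even t then ν else μ * ρ ^ n := by
  obtain ⟨u, rfl | rfl⟩ := Nat.even_or_odd' t
  · have hu : (μ * ρ ^ (n + 1)) ^ (4 * u) = 1 := by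
      rw [h, pow_mul]; norm_num
    have hodd : ¬ Even (2 * m - 1 - 2 * u) := by
      rw [Nat.not_even_iff_odd]; exact ⟨m - 1 - u, by omega⟩
    rw [if_pos (even_two_mul u), if_pos (even_two_mul u), if_neg hodd]
    linear_combination ν * hu
  · have hu : (μ * ρ ^ (n + 1)) ^ (2 * u) = 1 := by
      rw [h, pow_mul]; norm_num
    have heven : Even (2 * m - 1 - (2 * u + 1)) := ⟨m - 1 - u, by omega⟩
    rw [if_neg (Nat.not_even_two_mul_add_one u), if_neg (Nat.not_even_two_mul_add_one u),
      if_pos heven, Nat.add_sub_cancel]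
    linear_combination μ * ρ ^ n * hu

section TwoSkewDerivations

variable {A : Type*} [Ring A] [Algebra k A] {σ₁ σ₂ : A →ₐ[k] A} {D₁ D₂ : A →ₗ[k] A}
  {x z : A} {p ρ ν μ β : k} {n : ℕ}
  (hD₁ : IsSkewDerivation σ₁ D₁) (hD₁x : D₁ x = 1) (hσ₁x : σ₁ x = p • x) (hD₁z : D₁ z = 0)
  (hσ₁z : σ₁ z = ρ • z)
  (hD₂ : IsSkewDerivation σ₂ D₂) (hD₂x : D₂ x = 0) (hσ₂x : σ₂ x = ν • x)
  (hD₂z : D₂ z = β • x ^ (n + 1)) (hσ₂z : σ₂ z = μ • z)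

include hD₁ hD₁x hσ₁x hD₁z hσ₁z hD₂ hD₂z hσ₂z in
theorem iterate_map_map_pow (N : ℕ) :
    D₁^[n] (D₂ (z ^ N)) = ∑ t ∈ range N,
      (β * μ ^ t * ρ ^ (t * n) * qfact p (n + 1)) • (z ^ t * (x * z ^ (N - 1 - t))) := by
  have hD₁z' : ∀ c, D₁ (z ^ c) = 0 := fun c => by simp [hD₁.map_pow hσ₁z, hD₁z]
  rw [hD₂.map_pow hσ₂z, ← Module.End.pow_apply, map_sum]
  refine sum_congr rfl fun t _ => ?_
  have h := hD₁.qfact_smul_iterate_pow_mul hD₁x hσ₁x (hD₁z' (N - 1 - t)) 1 n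
  rw [qfact_one, one_smul, pow_one, add_comm 1 n] at h
  simp only [hD₂z, mul_smul_comm, smul_mul_assoc, map_smul, mul_assoc, Module.End.pow_apply,
    hD₁.iterate_pow_mul_of_map_eq_zero hD₁z hσ₁z, h, smul_smul, ← pow_mul]
  congr 1
  ring

include hD₂ hD₂x hσ₂x hD₂z hσ₂z in
theorem map_pow_mul_mul_pow (t u : ℕ) :
    D₂ (z ^ t * (x * z ^ u))
      = ∑ r ∈ range t, (β * μ ^ r) • (z ^ r * (x ^ (n + 1) * (z ^ (t - 1 - r) * (x ^ 1 * z ^ u))))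
        + ∑ r ∈ range u, (ν * μ ^ t * (β * μ ^ r)) •
            (z ^ t * (x ^ 1 * (z ^ r * (x ^ (n + 1) * z ^ (u - 1 - r))))) := by
  rw [hD₂, hD₂, hD₂x, zero_mul, zero_add, map_pow σ₂, hσ₂z, hσ₂x, hD₂.map_pow hσ₂z,
    hD₂.map_pow hσ₂z, hD₂z, sum_mul, mul_sum, mul_sum]
  congr 1 <;> refine sum_congr rfl fun r _ => ?_
  · simp only [smul_mul_assoc, mul_smul_comm, smul_smul, mul_assoc, pow_one, mul_comm β]
  · simp only [smul_pow, smul_mul_assoc, mul_smul_comm, smul_smul, mul_assoc, pow_one]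
    congr 1
    ring

include hD₁ hD₁x hσ₁x hD₁z hσ₁z hD₂ hD₂x hσ₂x hD₂z hσ₂z in
theorem iterate_map_map_pow_mul_mul_pow (h : μ * ρ ^ (n + 1) = -1) (t u : ℕ) :
    D₁^[n + 1 + 1] (D₂ (z ^ t * (x * z ^ u)))
      = (β * qfact p (n + 1 + 1) * (ρ ^ (t - 1) * (if Even t then 0 else 1)
          + ν * μ ^ t * ρ ^ (t * (n + 1 + 1)) * (if Even u then 0 else 1))) • z ^ (t + u - 1) := by
  have hword := hD₁.iterate_pow_mul_pow_mul_pow_mul_pow hD₁x hσ₁x hD₁z hσ₁z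
  rw [map_pow_mul_mul_pow hD₂ hD₂x hσ₂x hD₂z hσ₂z, ← Module.End.pow_apply, map_add, map_sum,
    map_sum]
  have hfirst : ∀ r ∈ range t,
      (D₁ ^ (n + 1 + 1))
          ((β * μ ^ r) • (z ^ r * (x ^ (n + 1) * (z ^ (t - 1 - r) * (x ^ 1 * z ^ u)))))
        = (β * qfact p (n + 1 + 1) * ρ ^ (t - 1) * (μ ^ r * ρ ^ (r * (n + 1))))
            • z ^ (t + u - 1) := by
    intro r hr
    obtain ⟨d, rfl⟩ : ∃ d, t = r + 1 + d := ⟨t - 1 - r, by have := mem_range.mp hr; omega⟩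
    rw [map_smul, Module.End.pow_apply, hword, smul_smul,
      show r + 1 + d - 1 - r = d by omega, show r + 1 + d + u - 1 = r + d + u by omega,
      show r + 1 + d - 1 = r + d by omega]
    congr 1
    ring
  have hsecond : ∀ r ∈ range u,
      (D₁ ^ (n + 1 + 1)) ((ν * μ ^ t * (β * μ ^ r)) •
          (z ^ t * (x ^ 1 * (z ^ r * (x ^ (n + 1) * z ^ (u - 1 - r))))))
        = (β * qfact p (n + 1 + 1) * (ν * μ ^ t * ρ ^ (t * (n + 1 + 1)))
            * (μ ^ r * ρ ^ (r * (n + 1)))) • z ^ (t + u - 1) := by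
    intro r hr
    rw [map_smul, Module.End.pow_apply, show n + 1 + 1 = 1 + (n + 1) by ring, hword, smul_smul,
      show t + r + (u - 1 - r) = t + u - 1 by have := mem_range.mp hr; omega]
    congr 1
    ring
  rw [sum_congr rfl hfirst, sum_congr rfl hsecond, ← sum_smul, ← sum_smul, ← add_smul, ← mul_sum,
    ← mul_sum, sum_range_pow_mul_pow_eq_ite h, sum_range_pow_mul_pow_eq_ite h]
  congr 1
  ring

include hD₁ hD₁x hσ₁x hD₁z hσ₁z hD₂ hD₂x hσ₂x hD₂z hσ₂z in
theorem iterate_map_map_iterate_map_map_pow_two_mul (h : μ * ρ ^ (n + 1) = -1) (m : ℕ) :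
    D₁^[n + 1 + 1] (D₂ (D₁^[n] (D₂ (z ^ (2 * m)))))
      = (m * β ^ 2 * qfact p (n + 1) * qfact p (n + 1 + 1) * (ν + μ * ρ ^ n))
          • z ^ (2 * (m - 1)) := by
  have hterm : ∀ t ∈ range (2 * m),
      D₁^[n + 1 + 1] (D₂ ((β * μ ^ t * ρ ^ (t * n) * qfact p (n + 1)) •
          (z ^ t * (x * z ^ (2 * m - 1 - t)))))
        = (β ^ 2 * qfact p (n + 1) * qfact p (n + 1 + 1) * (if Even t then ν else μ * ρ ^ n))
            • z ^ (2 * (m - 1)) := by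
    intro t ht
    have ht := mem_range.mp ht
    rw [map_smul, ← Module.End.pow_apply, map_smul, Module.End.pow_apply,
      iterate_map_map_pow_mul_mul_pow hD₁ hD₁x hσ₁x hD₁z hσ₁z hD₂ hD₂x hσ₂x hD₂z hσ₂z h,
      smul_smul, show t + (2 * m - 1 - t) - 1 = 2 * (m - 1) by omega, ← pow_mul_pow_mul_eq_ite h ht]
    congr 1
    ring
  rw [iterate_map_map_pow hD₁ hD₁x hσ₁x hD₁z hσ₁z hD₂ hD₂z hσ₂z, map_sum, ← Module.End.pow_apply,
    map_sum]
  simp only [Module.End.pow_apply]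
  rw [sum_congr rfl hterm, ← sum_smul, ← mul_sum, sum_range_two_mul_ite_even]
  congr 1
  ring

end TwoSkewDerivations

theorem alph_ι_zero (a b : k) : alph a b (FreeAlgebra.ι k 0) = a • FreeAlgebra.ι k 0 := by
  simp [alph]

theorem alph_ι_one (a b : k) : alph a b (FreeAlgebra.ι k 1) = b • FreeAlgebra.ι k 1 := by
  simp [alph]

theorem alph_zz (a b q11 q12 : k) (j : ℕ) :
    alph a b (zz q11 q12 j) = (a ^ j * b) • zz q11 q12 j := by
  induction j with
  | zero => simp [zz, alph_ι_one]
  | succ j ih =>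
    simp only [zz, map_sub, map_mul, map_smul, ih, alph_ι_zero, smul_sub,
      mul_smul_comm, smul_mul_assoc, smul_smul]
    module

theorem map_zz_eq_zero {q11 q12 : k} (hq11 : q11 ≠ 0) (hq12 : q12 ≠ 0)
    {D : FreeAlgebra k (Fin 2) →ₗ[k] FreeAlgebra k (Fin 2)}
    (hD : IsSkewDerivation (alph q11⁻¹ q12⁻¹) D) (hx1 : D (FreeAlgebra.ι k 0) = 1)
    (hx2 : D (FreeAlgebra.ι k 1) = 0) (j : ℕ) : D (zz q11 q12 j) = 0 := by
  induction j with
  | zero => exact hx2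
  | succ j ih =>
    rw [zz, map_sub, map_smul, hD, hD, ih, hx1, alph_zz, alph_ι_zero, mul_zero, add_zero, one_mul,
      zero_mul, zero_add, smul_mul_assoc, mul_one, smul_smul,
      mul_mul_mul_comm, ← mul_pow, mul_inv_cancel₀ hq11, one_pow, one_mul, mul_inv_cancel₀ hq12,
      one_smul, sub_self]

theorem map_zz {q11 q12 q21 b : k} (hq21 : q21 ≠ 0)
    {D : FreeAlgebra k (Fin 2) →ₗ[k] FreeAlgebra k (Fin 2)}
    (hD : IsSkewDerivation (alph q21⁻¹ b) D) (hx1 : D (FreeAlgebra.ι k 0) = 0)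
    (hx2 : D (FreeAlgebra.ι k 1) = 1) (j : ℕ) :
    D (zz q11 q12 j) = (q21⁻¹ ^ j * bb q11 q12 q21 j) • FreeAlgebra.ι k 0 ^ j := by
  induction j with
  | zero => simpa [bb, zz] using hx2
  | succ j ih =>
    rw [zz, map_sub, map_smul, hD, hD, ih, hx1, alph_zz, alph_ι_zero, bb_succ]
    simp only [zero_mul, zero_add, mul_zero, add_zero, smul_mul_assoc, mul_smul_comm, smul_smul,
      ← pow_succ', ← pow_succ, ← sub_smul]
    congr 1
    linear_combination (q11 ^ j * q12 * q21⁻¹ ^ j * bb q11 q12 q21 j) * inv_mul_cancel₀ hq21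

theorem D1_pow_D2_z_even_pow_general
    (q11 q12 q21 q22 : k)
    (hq11 : q11 ≠ 0) (hq12 : q12 ≠ 0) (hq21 : q21 ≠ 0)
    (D1 : FreeAlgebra k (Fin 2) →ₗ[k] FreeAlgebra k (Fin 2))
    (hD1x1 : D1 (FreeAlgebra.ι k 0) = 1)
    (hD1x2 : D1 (FreeAlgebra.ι k 1) = 0)
    (hD1mul : ∀ a b : FreeAlgebra k (Fin 2),
      D1 (a * b) = D1 a * b + alph q11⁻¹ q12⁻¹ a * D1 b)
    (D2 : FreeAlgebra k (Fin 2) →ₗ[k] FreeAlgebra k (Fin 2))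
    (hD2x1 : D2 (FreeAlgebra.ι k 0) = 0)
    (hD2x2 : D2 (FreeAlgebra.ι k 1) = 1)
    (hD2mul : ∀ a b : FreeAlgebra k (Fin 2),
      D2 (a * b) = D2 a * b + alph q21⁻¹ q22⁻¹ a * D2 b)
    (i : ℕ) (hi : 1 ≤ i)
    (hchi : q11 ^ (i ^ 2) * q12 ^ i * q21 ^ i * q22 = -1) :
    ∀ m : ℕ, 1 ≤ m →
      (⇑D1)^[i + 1] (D2 ((⇑D1)^[i - 1] (D2 (zz q11 q12 i ^ (2 * m)))))
        = ((m : k) * cc q11 q12 q21 i * cc q11 q12 q21 (i + 1))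
            • zz q11 q12 i ^ (2 * (m - 1)) := by
  intro m _
  obtain ⟨n, rfl⟩ : ∃ n, i = n + 1 := ⟨i - 1, by omega⟩
  set ρ := q11⁻¹ ^ (n + 1) * q12⁻¹ with hρdef
  set μ := q21⁻¹ ^ (n + 1) * q22⁻¹
  have key : μ * ρ ^ (n + 1) = -1 := by
    rw [← inv_neg_one, ← hchi]
    ring
  have hρ : μ * ρ ^ n = -(q11 ^ (n + 1) * q12) := by
    have hρinv : ρ * (q11 ^ (n + 1) * q12) = 1 := by
      rw [hρdef, mul_mul_mul_comm, ← mul_pow, inv_mul_cancel₀ hq11, one_pow, one_mul,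
        inv_mul_cancel₀ hq12]
    linear_combination (-(μ * ρ ^ n)) * hρinv + q11 ^ (n + 1) * q12 * key
  rw [Nat.add_sub_cancel, iterate_map_map_iterate_map_map_pow_two_mul hD1mul hD1x1 (alph_ι_zero _ _)
    (map_zz_eq_zero hq11 hq12 hD1mul hD1x1 hD1x2 _) (alph_zz _ _ _ _ _) hD2mul hD2x1
    (alph_ι_zero _ _) (map_zz hq21 hD2mul hD2x1 hD2x2 _) (alph_zz _ _ _ _ _) key, hρ]
  rw [cc, cc, bb_succ q11 q12 q21 (n + 1)]
  congr 1
  linear_combination (m * (q21⁻¹ ^ (n + 1) * bb q11 q12 q21 (n + 1)) ^ 2 * qfact q11⁻¹ (n + 1)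
    * qfact q11⁻¹ (n + 1 + 1) * q11 ^ (n + 1) * q12) * mul_inv_cancel₀ hq21

theorem D1_pow_D2_z_even_pow
    (q11 q12 q21 q22 : k)
    (hq11 : q11 ≠ 0) (hq12 : q12 ≠ 0) (hq21 : q21 ≠ 0) (hq22 : q22 ≠ 0)
    (D1 : FreeAlgebra k (Fin 2) →ₗ[k] FreeAlgebra k (Fin 2))
    (hD1one : D1 1 = 0)
    (hD1x1 : D1 (FreeAlgebra.ι k 0) = 1)
    (hD1x2 : D1 (FreeAlgebra.ι k 1) = 0)
    (hD1mul : ∀ a b : FreeAlgebra k (Fin 2),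
      D1 (a * b) = D1 a * b + alph q11⁻¹ q12⁻¹ a * D1 b)
    (D2 : FreeAlgebra k (Fin 2) →ₗ[k] FreeAlgebra k (Fin 2))
    (hD2one : D2 1 = 0)
    (hD2x1 : D2 (FreeAlgebra.ι k 0) = 0)
    (hD2x2 : D2 (FreeAlgebra.ι k 1) = 1)
    (hD2mul : ∀ a b : FreeAlgebra k (Fin 2),
      D2 (a * b) = D2 a * b + alph q21⁻¹ q22⁻¹ a * D2 b)
    (i : ℕ) (hi : 1 ≤ i)
    (hchi : q11 ^ (i ^ 2) * q12 ^ i * q21 ^ i * q22 = -1) :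
    ∀ m : ℕ, 1 ≤ m →
      (⇑D1)^[i + 1] (D2 ((⇑D1)^[i - 1] (D2 (zz q11 q12 i ^ (2 * m)))))
        = ((m : k) * cc q11 q12 q21 i * cc q11 q12 q21 (i + 1))
            • zz q11 q12 i ^ (2 * (m - 1)) :=
  D1_pow_D2_z_even_pow_general q11 q12 q21 q22 hq11 hq12 hq21 D1 hD1x1 hD1x2 hD1mul D2 hD2x1 hD2x2
    hD2mul i hi hchi
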